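/- arXiv:1610.03090 — 4 statements merged into one kernel-verified Lean document; each statement's English description precedes it below -/
import Mathlib

section
/- Let H be a finite-dimensional real inner product space, Θ ⊆ H a compact convex set, and ψ : H → ℝ a differentiable function that is σ-strongly convex on Θ, with Bregman divergence B_ψ(x, y) = ψ(x) − ψ(y) − ⟨∇ψ(y), x − y⟩. Set D = max_{x,y∈Θ} B_ψ(x, y) and φ_max = (1/2)·max_{x∈Θ} ‖∇ψ(x)‖. Let f_t : Θ → ℝ, t = 1, …, T, be convex functions all of whose subgradients on Θ have norm at most G. Let the mirror descent iterates be θ̂_1 ∈ Θ and θ̂_{t+1} = argmin_{θ∈Θ} [B_ψ(θ, θ̂_t) + η_t⟨g_t, θ − θ̂_t⟩], where g_t is a subgradient of f_t at θ̂_t, with a nonincreasing positive learning-rate sequence η_{t+1} ≤ η_t. Then for every comparator sequence w = (θ_t^w)_{t=1}^T in Θ with path length γ = ∑_{t=1}^{T−1} ‖θ_{t+1}^w − θ_t^w‖, the dynamic regret satisfies ∑_{t=1}^T f_t(θ̂_t) − ∑_{t=1}^T f_t(θ_t^w) ≤ D/η_{T+1} + (4·φ_max/η_T)·γ + (G²/(2σ))·∑_{t=1}^T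 η_t. -/
open scoped RealInnerProductSpace
open Finset

/-- Dynamic regret bound for composite mirror descent with nonincreasing learning rates:
`∑ f_t(θ̂_t) − ∑ f_t(θ_t^w) ≤ D/η_{T+1} + (4·φ_max/η_T)·γ + (G²/(2σ))·∑ η_t`. -/
theorem mirror_descent_dynamic_regret
    {H : Type*} [NormedAddCommGroup H] [InnerProductSpace ℝ H] [FiniteDimensional ℝ H]
    (Θ : Set H) (hΘne : Θ.Nonempty) (hΘcomp : IsCompact Θ) (hΘconv : Convex ℝ Θ)
    (ψ : H → ℝ) (ψ' : H → H) (hψ : ∀ x, HasGradientAt ψ (ψ' x) x)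
    (σ : ℝ) (hσ : 0 < σ)
    (hstrong : ∀ x ∈ Θ, ∀ y ∈ Θ, ψ y + ⟪ψ' y, x - y⟫ + σ / 2 * ‖x - y‖ ^ 2 ≤ ψ x)
    (D φmax : ℝ)
    (hD : IsGreatest {b : ℝ | ∃ x ∈ Θ, ∃ y ∈ Θ, b = ψ x - ψ y - ⟪ψ' y, x - y⟫} D)
    (hφ : IsGreatest ((fun x => (1 / 2) * ‖ψ' x‖) '' Θ) φmax)
    (T : ℕ) (f : ℕ → H → ℝ) (hf : ∀ t, ConvexOn ℝ Θ (f t))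
    (G : ℝ)
    (hG : ∀ t ∈ Finset.Icc 1 T, ∀ x ∈ Θ, ∀ gs : H,
      (∀ z ∈ Θ, f t x + ⟪gs, z - x⟫ ≤ f t z) → ‖gs‖ ≤ G)
    (η : ℕ → ℝ) (hη : ∀ t, 0 < η t) (hηmono : ∀ t, η (t + 1) ≤ η t)
    (θhat : ℕ → H) (g : ℕ → H)
    (hθ1 : θhat 1 ∈ Θ)
    (hg : ∀ t ∈ Finset.Icc 1 T, ∀ z ∈ Θ, f t (θhat t) + ⟪g t, z - θhat t⟫ ≤ f t z)
    (hupd : ∀ t ∈ Finset.Icc 1 T, θhat (t + 1) ∈ Θ ∧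
      IsMinOn (fun θ => (ψ θ - ψ (θhat t) - ⟪ψ' (θhat t), θ - θhat t⟫) +
        η t * ⟪g t, θ - θhat t⟫) Θ (θhat (t + 1)))
    (θw : ℕ → H) (hθw : ∀ t ∈ Finset.Icc 1 T, θw t ∈ Θ) :
    ∑ t ∈ Finset.Icc 1 T, f t (θhat t) - ∑ t ∈ Finset.Icc 1 T, f t (θw t) ≤
      D / η (T + 1) + (4 * φmax / η T) * (∑ t ∈ Finset.Ico 1 T, ‖θw (t + 1) - θw t‖) +
        (G ^ 2 / (2 * σ)) * ∑ t ∈ Finset.Icc 1 T, η t := by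
  classical
  -- basic facts
  have hηanti : ∀ ⦃s t : ℕ⦄, s ≤ t → η t ≤ η s :=
    fun s t h => antitone_nat_of_succ_le hηmono h
  have hmem : ∀ t, 1 ≤ t → t ≤ T + 1 → θhat t ∈ Θ := by
    intro t
    induction t with
    | zero => intro h _; exact absurd h (by norm_num)
    | succ s _ =>
      intro _ h2
      rcases Nat.eq_zero_or_pos s with rfl | hs
      · exact hθ1
      · exact (hupd s (Finset.mem_Icc.mpr ⟨hs, by omega⟩)).1
  have hBD : ∀ x ∈ Θ, ∀ y ∈ Θ, ψ x - ψ y - ⟪ψ' y, x - y⟫ ≤ D := by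
    intro x hx y hy
    exact hD.2 ⟨x, hx, y, hy, rfl⟩
  have hBnonneg : ∀ x ∈ Θ, ∀ y ∈ Θ, 0 ≤ ψ x - ψ y - ⟪ψ' y, x - y⟫ := by
    intro x hx y hy
    have := hstrong x hx y hy
    nlinarith [sq_nonneg ‖x - y‖, hσ]
  have hD0 : 0 ≤ D := by
    obtain ⟨x, hx⟩ := hΘne
    have : (0:ℝ) ∈ {b : ℝ | ∃ x ∈ Θ, ∃ y ∈ Θ, b = ψ x - ψ y - ⟪ψ' y, x - y⟫} :=
      ⟨x, hx, x, hx, by simp⟩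
    exact hD.2 this
  have hψ'le : ∀ x ∈ Θ, ‖ψ' x‖ ≤ 2 * φmax := by
    intro x hx
    have := hφ.2 ⟨x, hx, rfl⟩
    linarith
  have hφ0 : 0 ≤ φmax := by
    obtain ⟨x, _, hxe⟩ := hφ.1
    rw [← hxe]
    positivity
  -- variational inequality for the mirror descent update
  have hVI : ∀ t ∈ Finset.Icc 1 T, ∀ w ∈ Θ,
      0 ≤ ⟪ψ' (θhat (t+1)), w - θhat (t+1)⟫ - ⟪ψ' (θhat t), w - θhat (t+1)⟫ +
        η t * ⟪g t, w - θhat (t+1)⟫ := by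
    intro t ht w hw
    obtain ⟨hv, hmin⟩ := hupd t ht
    have h1 : HasFDerivAt ψ (InnerProductSpace.toDual ℝ H (ψ' (θhat (t+1))) : H →L[ℝ] ℝ)
        (θhat (t+1)) := (hψ _).hasFDerivAt
    have h2 : HasFDerivAt (fun θ : H => ⟪ψ' (θhat t), θ - θhat t⟫)
        (innerSL ℝ (ψ' (θhat t))) (θhat (t+1)) := by
      simpa only [innerSL_apply_apply, inner_sub_right] using
        ((innerSL ℝ (ψ' (θhat t))).hasFDerivAt (x := θhat (t+1))).sub_const
          ⟪ψ' (θhat t), θhat t⟫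
    have h3 : HasFDerivAt (fun θ : H => η t * ⟪g t, θ - θhat t⟫)
        (η t • innerSL ℝ (g t)) (θhat (t+1)) := by
      simpa only [innerSL_apply_apply, inner_sub_right, mul_sub] using
        (((innerSL ℝ (g t)).hasFDerivAt (x := θhat (t+1))).sub_const
          ⟪g t, θhat t⟫).const_mul (η t)
    have hF : HasFDerivAt
        (fun θ => (ψ θ - ψ (θhat t) - ⟪ψ' (θhat t), θ - θhat t⟫) + η t * ⟪g t, θ - θhat t⟫)
        (((InnerProductSpace.toDual ℝ H (ψ' (θhat (t+1))) : H →L[ℝ] ℝ) -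
          innerSL ℝ (ψ' (θhat t))) + η t • innerSL ℝ (g t)) (θhat (t+1)) :=
      ((h1.sub_const (ψ (θhat t))).sub h2).add h3
    have hcone : w - θhat (t+1) ∈ posTangentConeAt Θ (θhat (t+1)) :=
      sub_mem_posTangentConeAt_of_segment_subset (hΘconv.segment_subset hv hw)
    have := hmin.localize.hasFDerivWithinAt_nonneg hF.hasFDerivWithinAt hcone
    simpa only [ContinuousLinearMap.add_apply, ContinuousLinearMap.sub_apply,
      ContinuousLinearMap.smul_apply, innerSL_apply_apply, InnerProductSpace.toDual_apply_apply,
      smul_eq_mul] using this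
  set K : ℝ := G ^ 2 / (2 * σ) with hKdef
  set A : ℕ → ℝ := fun s => ψ (θw s) - ψ (θhat s) - ⟪ψ' (θhat s), θw s - θhat s⟫ with hA
  set C : ℕ → ℝ := fun s => ψ (θw s) - ψ (θhat (s+1)) - ⟪ψ' (θhat (s+1)), θw s - θhat (s+1)⟫
    with hC
  -- per-step inequality
  have hkey : ∀ t ∈ Finset.Icc 1 T,
      f t (θhat t) - f t (θw t) ≤ (A t - C t) / η t + η t * K := by
    intro t ht
    have htT := Finset.mem_Icc.mp ht
    have hu : θhat t ∈ Θ := hmem t htT.1 (le_trans htT.2 (Nat.le_succ T))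
    have hv : θhat (t+1) ∈ Θ := (hupd t ht).1
    have hwm : θw t ∈ Θ := hθw t ht
    have hsub := hg t ht (θw t) hwm
    have hvi := hVI t ht (θw t) hwm
    have hsc := hstrong (θhat (t+1)) hv (θhat t) hu
    have hgnorm : ‖g t‖ ≤ G := hG t ht (θhat t) hu (g t) (hg t ht)
    have hcs : ⟪g t, θhat t - θhat (t+1)⟫ ≤ G * ‖θhat t - θhat (t+1)‖ :=
      le_trans (real_inner_le_norm _ _)
        (mul_le_mul_of_nonneg_right hgnorm (norm_nonneg _))
    have e1 : ⟪g t, θw t - θhat t⟫ =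
        ⟪g t, θw t - θhat (t+1)⟫ - ⟪g t, θhat t - θhat (t+1)⟫ := by
      simp only [inner_sub_right]; ring
    have e2 : ⟪ψ' (θhat t), θw t - θhat t⟫ =
        ⟪ψ' (θhat t), θw t - θhat (t+1)⟫ + ⟪ψ' (θhat t), θhat (t+1) - θhat t⟫ := by
      simp only [inner_sub_right]; ring
    have hyoung : η t * (G * ‖θhat t - θhat (t+1)‖) ≤
        σ / 2 * ‖θhat (t+1) - θhat t‖ ^ 2 + η t * η t * K := by
      rw [norm_sub_rev (θhat (t+1))]
      have h1 : (0:ℝ) ≤ (σ * ‖θhat t - θhat (t+1)‖ - η t * G) ^ 2 := sq_nonneg _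
      have h2 : (0:ℝ) < 2 * σ := by linarith
      have h3 : (σ * ‖θhat t - θhat (t+1)‖ - η t * G) ^ 2 / (2 * σ) =
          σ / 2 * ‖θhat t - θhat (t+1)‖ ^ 2 - η t * (G * ‖θhat t - θhat (t+1)‖) +
            η t * η t * K := by
        rw [hKdef]; field_simp; ring
      have h4 := div_nonneg h1 h2.le
      linarith [h3 ▸ h4]
    have hm3 : η t * ⟪g t, θhat t - θhat (t+1)⟫ ≤ η t * (G * ‖θhat t - θhat (t+1)‖) :=
      mul_le_mul_of_nonneg_left hcs (hη t).le
    have hm1 : η t * (f t (θhat t) - f t (θw t)) ≤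
        η t * ⟪g t, θhat t - θhat (t+1)⟫ - η t * ⟪g t, θw t - θhat (t+1)⟫ := by
      have h0 : f t (θhat t) - f t (θw t) ≤
          ⟪g t, θhat t - θhat (t+1)⟫ - ⟪g t, θw t - θhat (t+1)⟫ := by linarith
      have h7 := mul_le_mul_of_nonneg_left h0 (hη t).le
      have h8 : η t * (⟪g t, θhat t - θhat (t+1)⟫ - ⟪g t, θw t - θhat (t+1)⟫) =
          η t * ⟪g t, θhat t - θhat (t+1)⟫ - η t * ⟪g t, θw t - θhat (t+1)⟫ :=
        mul_sub _ _ _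
      linarith
    have hmul : η t * (f t (θhat t) - f t (θw t)) ≤ (A t - C t) + η t * η t * K := by
      simp only [hA, hC]
      linarith
    rw [div_add' _ _ _ (hη t).ne', le_div_iff₀ (hη t)]
    have e9 : η t * K * η t = η t * η t * K := by ring
    linarith [mul_comm (f t (θhat t) - f t (θw t)) (η t)]
  -- summed bound for the Bregman terms
  have hS : ∑ t ∈ Finset.Icc 1 T, (A t - C t) / η t ≤
      D / η (T + 1) + (4 * φmax / η T) * (∑ t ∈ Finset.Ico 1 T, ‖θw (t + 1) - θw t‖) := by
    rcases Nat.eq_zero_or_pos T with rfl | hTpos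
    · simp only [show Finset.Icc 1 0 = (∅ : Finset ℕ) from Finset.Icc_eq_empty (by omega),
        show Finset.Ico 1 0 = (∅ : Finset ℕ) from Finset.Ico_eq_empty (by omega),
        Finset.sum_empty, mul_zero, add_zero, Nat.zero_add, zero_add]
      exact div_nonneg hD0 (hη 1).le
    · obtain ⟨m, rfl⟩ : ∃ m, T = m + 1 := ⟨T - 1, by omega⟩
      have hconv : ∑ t ∈ Finset.Icc 1 (m+1), (A t - C t) / η t =
          ∑ i ∈ Finset.range (m+1), (A (1+i) - C (1+i)) / η (1+i) := by
        rw [← Finset.Ico_add_one_right_eq_Icc, Finset.sum_Ico_eq_sum_range]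
        norm_num
      rw [hconv]
      simp only [sub_div]
      rw [Finset.sum_sub_distrib,
        Finset.sum_range_succ' (fun i => A (1+i) / η (1+i)) m,
        Finset.sum_range_succ (fun i => C (1+i) / η (1+i)) m]
      have hper : ∀ i ∈ Finset.range m,
          A (1+i+1) / η (1+i+1) - C (1+i) / η (1+i) ≤
            (4 * φmax / η (m+1)) * ‖θw (1+i+1) - θw (1+i)‖ +
              (D / η (1+i+1) - D / η (1+i)) := by
        intro i hi
        have him : i < m := Finset.mem_range.mp hi
        have hw1 : θw (1+i) ∈ Θ := hθw _ (Finset.mem_Icc.mpr ⟨by omega, by omega⟩)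
        have hw2 : θw (1+i+1) ∈ Θ := hθw _ (Finset.mem_Icc.mpr ⟨by omega, by omega⟩)
        have hv : θhat (1+i+1) ∈ Θ := hmem _ (by omega) (by omega)
        have hABd : A (1+i+1) - C (1+i) ≤ 4 * φmax * ‖θw (1+i+1) - θw (1+i)‖ := by
          simp only [hA, hC]
          have hconv2 := hstrong (θw (1+i)) hw1 (θw (1+i+1)) hw2
          have hb : ⟪ψ' (θw (1+i+1)) - ψ' (θhat (1+i+1)), θw (1+i+1) - θw (1+i)⟫ ≤
              (2 * φmax + 2 * φmax) * ‖θw (1+i+1) - θw (1+i)‖ :=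
            le_trans (real_inner_le_norm _ _)
              (mul_le_mul_of_nonneg_right
                (le_trans (norm_sub_le _ _)
                  (add_le_add (hψ'le _ hw2) (hψ'le _ hv))) (norm_nonneg _))
          have e3 : ⟪ψ' (θw (1+i+1)) - ψ' (θhat (1+i+1)), θw (1+i+1) - θw (1+i)⟫ =
              -⟪ψ' (θw (1+i+1)), θw (1+i) - θw (1+i+1)⟫ -
                (⟪ψ' (θhat (1+i+1)), θw (1+i+1) - θhat (1+i+1)⟫ -
                  ⟪ψ' (θhat (1+i+1)), θw (1+i) - θhat (1+i+1)⟫) := by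
            simp only [inner_sub_left, inner_sub_right]; ring
          have e4 : (2 * φmax + 2 * φmax) * ‖θw (1+i+1) - θw (1+i)‖ =
              4 * φmax * ‖θw (1+i+1) - θw (1+i)‖ := by ring
          nlinarith [sq_nonneg ‖θw (1+i) - θw (1+i+1)‖, hσ]
        have hCnn : 0 ≤ C (1+i) := by
          have := hBnonneg (θw (1+i)) hw1 (θhat (1+i+1)) hv
          simpa [hC] using this
        have hCD : C (1+i) ≤ D := by
          have := hBD (θw (1+i)) hw1 (θhat (1+i+1)) hv
          simpa [hC] using this
        have hq1 : (A (1+i+1) - C (1+i)) / η (1+i+1) ≤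
            (4 * φmax * ‖θw (1+i+1) - θw (1+i)‖) / η (1+i+1) :=
          (div_le_div_iff_of_pos_right (hη _)).mpr hABd
        have hq2 : (4 * φmax * ‖θw (1+i+1) - θw (1+i)‖) / η (1+i+1) ≤
            (4 * φmax * ‖θw (1+i+1) - θw (1+i)‖) / η (m+1) :=
          div_le_div_of_nonneg_left
            (by positivity) (hη _) (hηanti (by omega))
        have hq3 : C (1+i) / η (1+i+1) - C (1+i) / η (1+i) ≤
            D / η (1+i+1) - D / η (1+i) := by
          have h6 : (D - C (1+i)) / η (1+i) ≤ (D - C (1+i)) / η (1+i+1) :=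
            div_le_div_of_nonneg_left (by linarith) (hη _) (hηmono _)
          have e7 : (D - C (1+i)) / η (1+i) = D / η (1+i) - C (1+i) / η (1+i) :=
            sub_div _ _ _
          have e8 : (D - C (1+i)) / η (1+i+1) = D / η (1+i+1) - C (1+i) / η (1+i+1) :=
            sub_div _ _ _
          linarith
        have e5 : A (1+i+1) / η (1+i+1) =
            (A (1+i+1) - C (1+i)) / η (1+i+1) + C (1+i) / η (1+i+1) := by
          rw [sub_div]; ring
        have e6 : (4 * φmax * ‖θw (1+i+1) - θw (1+i)‖) / η (m+1) =
            (4 * φmax / η (m+1)) * ‖θw (1+i+1) - θw (1+i)‖ := by ring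
        linarith
      have hsum3 := Finset.sum_le_sum hper
      rw [Finset.sum_add_distrib, ← Finset.mul_sum] at hsum3
      have htel : ∑ i ∈ Finset.range m, (D / η (1+i+1) - D / η (1+i)) =
          D / η (1+m) - D / η 1 := Finset.sum_range_sub (fun i => D / η (1+i)) m
      rw [htel] at hsum3
      have hγ : ∑ t ∈ Finset.Ico 1 (m+1), ‖θw (t + 1) - θw t‖ =
          ∑ i ∈ Finset.range m, ‖θw (1+i+1) - θw (1+i)‖ := by
        rw [Finset.sum_Ico_eq_sum_range, Nat.add_sub_cancel]
      have hA1 : A (1+0) / η (1+0) ≤ D / η 1 := by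
        have hw1 : θw 1 ∈ Θ := hθw 1 (Finset.mem_Icc.mpr ⟨le_refl 1, by omega⟩)
        have hAle : A 1 ≤ D := by
          have := hBD (θw 1) hw1 (θhat 1) hθ1
          simpa [hA] using this
        norm_num
        exact (div_le_div_iff_of_pos_right (hη 1)).mpr hAle
      have hCT : 0 ≤ C (1+m) / η (1+m) := by
        have hwT : θw (1+m) ∈ Θ := hθw _ (Finset.mem_Icc.mpr ⟨by omega, by omega⟩)
        have hvT : θhat (1+m+1) ∈ Θ := hmem _ (by omega) (by omega)
        have := hBnonneg (θw (1+m)) hwT (θhat (1+m+1)) hvT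
        exact div_nonneg (by simpa [hC] using this) (hη _).le
      have hDη : D / η (1+m) ≤ D / η (m+1+1) :=
        div_le_div_of_nonneg_left hD0 (hη _) (by
          have : η (m+1+1) ≤ η (1+m) := hηanti (by omega)
          exact this)
      rw [hγ]
      have hsplit2 : ∑ i ∈ Finset.range m,
          (A (1+i+1) / η (1+i+1) - C (1+i) / η (1+i)) =
          (∑ i ∈ Finset.range m, A (1+i+1) / η (1+i+1)) -
            ∑ i ∈ Finset.range m, C (1+i) / η (1+i) := Finset.sum_sub_distrib _ _
      have hcg : (∑ k ∈ Finset.range m, A (1+(k+1)) / η (1+(k+1))) =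
          ∑ i ∈ Finset.range m, A (1+i+1) / η (1+i+1) := rfl
      linarith [hsum3, hsplit2, hcg, hA1, hCT, hDη]
  -- assemble
  have hsplit : ∑ t ∈ Finset.Icc 1 T, f t (θhat t) - ∑ t ∈ Finset.Icc 1 T, f t (θw t) =
      ∑ t ∈ Finset.Icc 1 T, (f t (θhat t) - f t (θw t)) := (Finset.sum_sub_distrib _ _).symm
  have hsum4 : ∑ t ∈ Finset.Icc 1 T, (f t (θhat t) - f t (θw t)) ≤
      ∑ t ∈ Finset.Icc 1 T, ((A t - C t) / η t + η t * K) := Finset.sum_le_sum hkey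
  rw [Finset.sum_add_distrib] at hsum4
  have hKsum : ∑ t ∈ Finset.Icc 1 T, η t * K = K * ∑ t ∈ Finset.Icc 1 T, η t := by
    rw [Finset.mul_sum]; exact Finset.sum_congr rfl fun t _ => mul_comm _ _
  rw [hKsum] at hsum4
  rw [hsplit]
  calc ∑ t ∈ Finset.Icc 1 T, (f t (θhat t) - f t (θw t)) ≤
      (∑ t ∈ Finset.Icc 1 T, (A t - C t) / η t) + K * ∑ t ∈ Finset.Icc 1 T, η t := hsum4
    _ ≤ D / η (T + 1) + (4 * φmax / η T) * (∑ t ∈ Finset.Ico 1 T, ‖θw (t + 1) - θw t‖) +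
        K * ∑ t ∈ Finset.Icc 1 T, η t := by linarith
end

section
/- Let H be a finite-dimensional real inner product space, Θ ⊆ H a compact convex set containing 0, and ψ : H → ℝ a differentiable function that is σ-strongly convex on Θ, with Bregman divergence B_ψ(x, y) = ψ(x) − ψ(y) − ⟨∇ψ(y), x − y⟩ and D_max = max_{x,y∈Θ} B_ψ(x, y). Let f_t : Θ → ℝ, t = 1, …, T, be convex functions all of whose subgradients on Θ have norm at most G_f. Let the mirror descent iterates be θ̂_1 = 0 and θ̂_{t+1} = argmin_{θ∈Θ} [B_ψ(θ, θ̂_t) + η⟨g_t, θ − θ̂_t⟩], where g_t is a subgradient of f_t at θ̂_t and η = √(2σD_max)/(G_f·√T). Then the static regret satisfies ∑_{t=1}^T f_t(θ̂_t) − min_{θ∈Θ} ∑_{t=1}^T f_t(θ) ≤ G_f·√(2·T·D_max/σ). -/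
open scoped RealInnerProductSpace
open Set Filter Topology

/-- Variational inequality at a minimizer of the mirror-descent objective. -/
lemma md_varineq {H : Type*} [NormedAddCommGroup H] [InnerProductSpace ℝ H] [CompleteSpace H]
    (Θ : Set H) (hconv : Convex ℝ Θ)
    (ψ : H → ℝ) (ψ' : H → H) (hψ : ∀ x, HasGradientAt ψ (ψ' x) x)
    (a : H) (η : ℝ) (g : H) (b : H) (hb : b ∈ Θ)
    (hmin : IsMinOn (fun θ => (ψ θ - ψ a - ⟪ψ' a, θ - a⟫) + η * ⟪g, θ - a⟫) Θ b)
    (x : H) (hx : x ∈ Θ) :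
    0 ≤ ⟪ψ' b - ψ' a, x - b⟫ + η * ⟪g, x - b⟫ := by
  set v := x - b with hv
  set F : H → ℝ := fun θ => (ψ θ - ψ a - ⟪ψ' a, θ - a⟫) + η * ⟪g, θ - a⟫ with hF
  set φ : ℝ → ℝ := fun l => F (b + l • v) with hφ
  set d : ℝ := ⟪ψ' b, v⟫ - ⟪ψ' a, v⟫ + η * ⟪g, v⟫ with hd
  have hc : HasDerivAt (fun l : ℝ => b + l • v) v 0 := by
    simpa using ((hasDerivAt_id (0:ℝ)).smul_const v).const_add b
  have hlin : ∀ w : H, HasDerivAt (fun l : ℝ => ⟪w, b + l • v - a⟫) ⟪w, v⟫ 0 := by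
    intro w
    have heq : (fun l : ℝ => ⟪w, b + l • v - a⟫) = fun l : ℝ => ⟪w, b - a⟫ + l * ⟪w, v⟫ := by
      funext l
      rw [show b + l • v - a = (b - a) + l • v by abel, inner_add_right, real_inner_smul_right]
    rw [heq]
    simpa using ((hasDerivAt_id (0:ℝ)).mul_const (⟪w, v⟫ : ℝ)).const_add (⟪w, b - a⟫ : ℝ)
  have hψc : HasDerivAt (fun l : ℝ => ψ (b + l • v)) ⟪ψ' b, v⟫ 0 := by
    have hb0 : HasFDerivAt ψ ((InnerProductSpace.toDual ℝ H) (ψ' b)) (b + (0:ℝ) • v) := by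
      simpa using (hψ b).hasFDerivAt
    have := hb0.comp_hasDerivAt 0 hc
    simpa [InnerProductSpace.toDual_apply_apply, Function.comp_def] using this
  have hder : HasDerivAt φ d 0 := by
    have h1 : HasDerivAt (fun l : ℝ => ψ (b + l • v) - ψ a - ⟪ψ' a, b + l • v - a⟫
        + η * ⟪g, b + l • v - a⟫) d 0 := by
      exact ((hψc.sub_const (ψ a)).sub (by simpa using hlin (ψ' a))).add
        ((hlin g).const_mul η)
    simpa [hφ, hF, hd] using (by simpa using h1)
  have hmem : ∀ l : ℝ, l ∈ Icc (0:ℝ) 1 → b + l • v ∈ Θ := fun l hl =>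
    hconv.add_smul_sub_mem hb hx hl
  have hφmin : ∀ l : ℝ, l ∈ Icc (0:ℝ) 1 → φ 0 ≤ φ l := by
    intro l hl
    have h0 : φ 0 = F b := by simp [hφ]
    rw [h0]
    exact hmin (hmem l hl)
  have hslope : Tendsto (slope φ 0) (𝓝[>] (0:ℝ)) (𝓝 d) := by
    have := (hder.hasDerivWithinAt (s := Ioi (0:ℝ)))
    rwa [hasDerivWithinAt_iff_tendsto_slope' (by simp)] at this
  have hnn : ∀ᶠ l in 𝓝[>] (0:ℝ), 0 ≤ slope φ 0 l := by
    filter_upwards [Ioc_mem_nhdsGT_of_mem (⟨le_rfl, zero_lt_one⟩ : (0:ℝ) ∈ Ico (0:ℝ) 1)]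
      with l hl
    have h1 : φ 0 ≤ φ l := hφmin l ⟨hl.1.le, hl.2⟩
    have h2 : (0:ℝ) < l := hl.1
    rw [slope_def_field, sub_zero]
    exact div_nonneg (sub_nonneg.mpr h1) h2.le
  have : 0 ≤ d := ge_of_tendsto hslope hnn
  calc (0:ℝ) ≤ d := this
    _ = ⟪ψ' b - ψ' a, x - b⟫ + η * ⟪g, x - b⟫ := by
        rw [inner_sub_left]

/-- Static regret bound for mirror descent with fixed learning rate
`η = √(2σ·D_max)/(G_f·√T)`: the static regret is at most `G_f·√(2·T·D_max/σ)`. -/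
theorem mirror_descent_static_regret
    {H : Type*} [NormedAddCommGroup H] [InnerProductSpace ℝ H] [FiniteDimensional ℝ H]
    (Θ : Set H) (hΘ0 : (0 : H) ∈ Θ) (hΘcomp : IsCompact Θ) (hΘconv : Convex ℝ Θ)
    (ψ : H → ℝ) (ψ' : H → H) (hψ : ∀ x, HasGradientAt ψ (ψ' x) x)
    (σ : ℝ) (hσ : 0 < σ)
    (hstrong : ∀ x ∈ Θ, ∀ y ∈ Θ, ψ y + ⟪ψ' y, x - y⟫ + σ / 2 * ‖x - y‖ ^ 2 ≤ ψ x)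
    (Dmax : ℝ)
    (hD : IsGreatest {b : ℝ | ∃ x ∈ Θ, ∃ y ∈ Θ, b = ψ x - ψ y - ⟪ψ' y, x - y⟫} Dmax)
    (T : ℕ) (hT : 1 ≤ T) (f : ℕ → H → ℝ) (hf : ∀ t, ConvexOn ℝ Θ (f t))
    (Gf : ℝ) (hGf : 0 < Gf)
    (hG : ∀ t ∈ Finset.Icc 1 T, ∀ x ∈ Θ, ∀ gs : H,
      (∀ z ∈ Θ, f t x + ⟪gs, z - x⟫ ≤ f t z) → ‖gs‖ ≤ Gf)
    (η : ℝ) (hη : η = Real.sqrt (2 * σ * Dmax) / (Gf * Real.sqrt T))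
    (θhat : ℕ → H) (g : ℕ → H)
    (hθ1 : θhat 1 = 0)
    (hg : ∀ t ∈ Finset.Icc 1 T, ∀ z ∈ Θ, f t (θhat t) + ⟪g t, z - θhat t⟫ ≤ f t z)
    (hupd : ∀ t ∈ Finset.Icc 1 T, θhat (t + 1) ∈ Θ ∧
      IsMinOn (fun θ => (ψ θ - ψ (θhat t) - ⟪ψ' (θhat t), θ - θhat t⟫) +
        η * ⟪g t, θ - θhat t⟫) Θ (θhat (t + 1))) :
    ∀ θ ∈ Θ, ∑ t ∈ Finset.Icc 1 T, f t (θhat t) - ∑ t ∈ Finset.Icc 1 T, f t θ ≤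
      Gf * Real.sqrt (2 * T * Dmax / σ) := by
  intro θ hθ
  set B : H → H → ℝ := fun x y => ψ x - ψ y - ⟪ψ' y, x - y⟫ with hB
  clear_value B
  have hmem : ∀ t : ℕ, 1 ≤ t → t ≤ T + 1 → θhat t ∈ Θ := by
    intro t h1 h2
    match t, h1 with
    | 1, _ => rw [hθ1]; exact hΘ0
    | (s+2), _ =>
      exact (hupd (s+1) (Finset.mem_Icc.mpr ⟨by omega, by omega⟩)).1
  have hDnn : 0 ≤ Dmax := hD.2 ⟨0, hΘ0, 0, hΘ0, by simp⟩
  have hBlow : ∀ x ∈ Θ, ∀ y ∈ Θ, σ/2 * ‖x - y‖^2 ≤ B x y := by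
    intro x hx y hy
    have := hstrong x hx y hy
    simp only [hB]
    linarith
  rcases eq_or_lt_of_le hDnn with hD0 | hDpos
  · -- Dmax = 0 : Θ is a single point
    have hsingle : ∀ x ∈ Θ, ∀ y ∈ Θ, x = y := by
      intro x hx y hy
      have h1 : B x y ≤ Dmax := hD.2 ⟨x, hx, y, hy, by rw [hB]⟩
      have h2 := hBlow x hx y hy
      have h5 : σ/2 * ‖x - y‖^2 ≤ σ/2 * 0 := by rw [mul_zero]; linarith
      have h3 : ‖x - y‖^2 = 0 :=
        le_antisymm (le_of_mul_le_mul_left h5 (half_pos hσ)) (sq_nonneg _)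
      have h4 : x - y = 0 := by
        rwa [pow_eq_zero_iff (by norm_num : 2 ≠ 0), norm_eq_zero] at h3
      rw [sub_eq_zero] at h4
      exact h4
    have hsame : ∑ t ∈ Finset.Icc 1 T, f t (θhat t) = ∑ t ∈ Finset.Icc 1 T, f t θ := by
      refine Finset.sum_congr rfl fun t ht => ?_
      obtain ⟨h1, h2⟩ := Finset.mem_Icc.mp ht
      rw [hsingle (θhat t) (hmem t h1 (by omega)) θ hθ]
    rw [hsame, sub_self, ← hD0]
    simp
  · -- Dmax > 0
    have hTpos : (0:ℝ) < T := by exact_mod_cast hT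
    have hsT : (0:ℝ) < Real.sqrt T := Real.sqrt_pos.mpr hTpos
    have hηpos : 0 < η := by
      rw [hη]
      exact div_pos (Real.sqrt_pos.mpr (by positivity)) (mul_pos hGf hsT)
    have hη2 : η^2 * (T * Gf^2 / (2*σ)) = Dmax := by
      rw [hη, div_pow, mul_pow, Real.sq_sqrt (by positivity), Real.sq_sqrt hTpos.le]
      field_simp
    have hηR : η * (Gf * Real.sqrt (2 * T * Dmax / σ)) = 2 * Dmax := by
      have key : Real.sqrt (2*σ*Dmax) * Real.sqrt (2*(T:ℝ)*Dmax/σ)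
          = 2*Dmax*Real.sqrt T := by
        rw [← Real.sqrt_mul (by positivity)]
        rw [show (2*σ*Dmax) * (2*(T:ℝ)*Dmax/σ) = (2*Dmax)^2 * T by field_simp]
        rw [Real.sqrt_mul (by positivity), Real.sqrt_sq (by positivity)]
      have expand : η * (Gf * Real.sqrt (2 * (T:ℝ) * Dmax / σ))
          = (Real.sqrt (2*σ*Dmax) * Real.sqrt (2*(T:ℝ)*Dmax/σ)) / Real.sqrt T := by
        rw [hη]; field_simp
      rw [expand, key, mul_div_assoc, div_self hsT.ne', mul_one]
    have hkey : ∀ t ∈ Finset.Icc 1 T, η * (f t (θhat t) - f t θ) ≤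
        B θ (θhat t) - B θ (θhat (t+1)) + η^2 * Gf^2 / (2*σ) := by
      intro t ht
      obtain ⟨ht1, ht2⟩ := Finset.mem_Icc.mp ht
      have ha : θhat t ∈ Θ := hmem t ht1 (by omega)
      obtain ⟨hbΘ, hminb⟩ := hupd t ht
      have hVI := md_varineq Θ hΘconv ψ ψ' hψ (θhat t) η (g t) (θhat (t+1)) hbΘ hminb θ hθ
      have hsub : f t (θhat t) - f t θ ≤ ⟪g t, θhat t - θ⟫ := by
        have h := hg t ht θ hθ
        have h2 : ⟪g t, θhat t - θ⟫ = -⟪g t, θ - θhat t⟫ := by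
          rw [show θhat t - θ = -(θ - θhat t) by abel, inner_neg_right]
        linarith
      have hGn : ‖g t‖ ≤ Gf := hG t ht (θhat t) ha (g t) (hg t ht)
      set a := θhat t with haeq
      set b := θhat (t+1) with hbeq
      clear_value a b
      have h3pt : ⟪ψ' b - ψ' a, θ - b⟫ = B θ a - B θ b - B b a := by
        simp only [hB, inner_sub_left, inner_sub_right]
        ring
      have hcs : ⟪g t, a - b⟫ ≤ Gf * ‖a - b‖ :=
        le_trans (real_inner_le_norm _ _)
          (mul_le_mul_of_nonneg_right hGn (norm_nonneg _))
      have hquad : η * (Gf * ‖a-b‖) - σ/2 * ‖a-b‖^2 ≤ η^2 * Gf^2 / (2*σ) := by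
        have h0 := sq_nonneg (η*Gf - σ*‖a-b‖)
        have h1 : (0:ℝ) < 2*σ := by linarith
        rw [le_div_iff₀ h1]
        nlinarith [h0]
      have e1 := mul_le_mul_of_nonneg_left hsub hηpos.le
      have e2 : ⟪g t, a - θ⟫ = ⟪g t, a - b⟫ + ⟪g t, b - θ⟫ := by
        rw [← inner_add_right]; congr 1; abel
      have e3 : η * ⟪g t, b - θ⟫ ≤ B θ a - B θ b - B b a := by
        have hneg : ⟪g t, θ - b⟫ = -⟪g t, b - θ⟫ := by
          rw [show θ - b = -(b - θ) by abel, inner_neg_right]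
        rw [hneg] at hVI
        rw [← h3pt]
        linarith
      have e4 : η * ⟪g t, a - b⟫ ≤ η * (Gf * ‖a - b‖) :=
        mul_le_mul_of_nonneg_left hcs hηpos.le
      have e5 : σ/2 * ‖a - b‖^2 ≤ B b a := by
        have := hBlow b hbΘ a ha
        rwa [norm_sub_rev] at this
      rw [e2] at e1
      linarith [e1, e3, e4, e5, hquad]
    -- telescoping sum
    have htel : ∀ n : ℕ, ∑ t ∈ Finset.Icc 1 n, (B θ (θhat t) - B θ (θhat (t+1)))
        = B θ (θhat 1) - B θ (θhat (n+1)) := by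
      intro n
      induction n with
      | zero => simp
      | succ n ih =>
        rw [Finset.sum_Icc_succ_top (by omega : 1 ≤ n + 1), ih]
        ring
    have hsum : η * (∑ t ∈ Finset.Icc 1 T, f t (θhat t) - ∑ t ∈ Finset.Icc 1 T, f t θ)
        ≤ B θ (θhat 1) - B θ (θhat (T+1)) + T * (η^2 * Gf^2 / (2*σ)) := by
      rw [← Finset.sum_sub_distrib, Finset.mul_sum]
      calc ∑ t ∈ Finset.Icc 1 T, η * (f t (θhat t) - f t θ)
          ≤ ∑ t ∈ Finset.Icc 1 T, (B θ (θhat t) - B θ (θhat (t+1)) + η^2 * Gf^2 / (2*σ)) :=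
            Finset.sum_le_sum hkey
        _ = (∑ t ∈ Finset.Icc 1 T, (B θ (θhat t) - B θ (θhat (t+1))))
            + T * (η^2 * Gf^2 / (2*σ)) := by
            rw [Finset.sum_add_distrib, Finset.sum_const, Nat.card_Icc]
            simp [nsmul_eq_mul]
        _ = B θ (θhat 1) - B θ (θhat (T+1)) + T * (η^2 * Gf^2 / (2*σ)) := by rw [htel T]
    have hB1 : B θ (θhat 1) ≤ Dmax :=
      hD.2 ⟨θ, hθ, θhat 1, hθ1 ▸ hΘ0, by rw [hB]⟩
    have hB2 : 0 ≤ B θ (θhat (T+1)) :=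
      le_trans (by positivity) (hBlow θ hθ (θhat (T+1)) (hmem (T+1) (by omega) le_rfl))
    have hc' : (T:ℝ) * (η^2 * Gf^2 / (2*σ)) = Dmax := by rw [← hη2]; ring
    have hfin : η * (∑ t ∈ Finset.Icc 1 T, f t (θhat t) - ∑ t ∈ Finset.Icc 1 T, f t θ)
        ≤ η * (Gf * Real.sqrt (2 * T * Dmax / σ)) := by
      rw [hηR]
      linarith
    exact le_of_mul_le_mul_left hfin hηpos
end

section
/- Under the OCELAD setup, for every t ≥ 1 the total weight satisfies W̃_t = ∑_{I∈ℐ} w̃_t(I) ≤ t·(log₂(t) + 1). -/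
/-- The dyadic interval `I_{j,k} = {k·2^j, …, (k+1)·2^j − 1}` (requires `k ≥ 1`). -/
def dIval (j k : ℕ) : Finset ℕ := Finset.Ico (k * 2 ^ j) ((k + 1) * 2 ^ j)

/-- The set of (index pairs of) dyadic intervals active at time `t`. -/
def ACT (t : ℕ) : Finset (ℕ × ℕ) :=
  ((Finset.range (t + 1)) ×ˢ (Finset.range (t + 1))).filter
    (fun p => 1 ≤ p.2 ∧ t ∈ dIval p.1 p.2)

/-- The (index pairs of) dyadic intervals whose left endpoint `k·2^j` is at most `t`;
these are the only intervals with possibly nonzero weight `w̃_t(I)`.  (Any such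
pair satisfies `j, k ≤ t`, so this finite set contains all of them.) -/
def startedBy (t : ℕ) : Finset (ℕ × ℕ) :=
  ((Finset.range (t + 1)) ×ˢ (Finset.range (t + 1))).filter
    (fun p => 1 ≤ p.2 ∧ p.2 * 2 ^ p.1 ≤ t)

/-- The learning rate `η_I = min{1/2, 1/√|I|}` for an interval at dyadic scale `j`. -/
noncomputable def etaI (j : ℕ) : ℝ := min (1 / 2) (1 / Real.sqrt (2 ^ j))

/-!
Each started interval's weight evolves as `w̃_{t+1}(I) = w̃_t(I) + ρ_t w_t(I) r_t(I)`, where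
`w_t(I) = 0` off the active intervals. By convexity of `ℓ_t` (Jensen at the weighted average
`θ̂_t`), `∑_I w_t(I) r_t(I) ≤ 0`, so the total weight never grows except through the intervals
born at time `t + 1`, each of weight `1`. At most `log₂ (t + 1) + 1` intervals start at any given
time (one per scale), and summing gives `W̃_t ≤ t (log₂ t + 1)`.
-/

open Finset

lemma mem_dIval {t j k : ℕ} : t ∈ dIval j k ↔ k * 2 ^ j ≤ t ∧ t < (k + 1) * 2 ^ j :=
  Finset.mem_Ico

lemma scale_lt_succ_of_start_le {j k t : ℕ} (hk : 1 ≤ k) (h : k * 2 ^ j ≤ t) : j < t + 1 :=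
  Nat.lt_succ_of_le <| (Nat.lt_two_pow_self).le.trans <| (Nat.le_mul_of_pos_left _ hk).trans h

lemma index_lt_succ_of_start_le {j k t : ℕ} (h : k * 2 ^ j ≤ t) : k < t + 1 :=
  Nat.lt_succ_of_le <| (Nat.le_mul_of_pos_right _ (Nat.two_pow_pos j)).trans h

lemma mem_startedBy {t : ℕ} {I : ℕ × ℕ} : I ∈ startedBy t ↔ 1 ≤ I.2 ∧ I.2 * 2 ^ I.1 ≤ t := by
  simp only [startedBy, mem_filter, mem_product, mem_range]
  exact ⟨fun h => h.2, fun h => ⟨⟨scale_lt_succ_of_start_le h.1 h.2, index_lt_succ_of_start_le h.2⟩, h⟩⟩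

lemma mem_ACT {t : ℕ} {I : ℕ × ℕ} : I ∈ ACT t ↔ 1 ≤ I.2 ∧ t ∈ dIval I.1 I.2 := by
  simp only [ACT, mem_filter, mem_product, mem_range]
  refine ⟨fun h => h.2, fun h => ⟨⟨?_, ?_⟩, h⟩⟩
  · exact scale_lt_succ_of_start_le h.1 (mem_dIval.1 h.2).1
  · exact index_lt_succ_of_start_le (mem_dIval.1 h.2).1

lemma ACT_subset_startedBy (t : ℕ) : ACT t ⊆ startedBy t := fun I hI => by
  rw [mem_ACT, mem_dIval] at hI
  exact mem_startedBy.2 ⟨hI.1, hI.2.1⟩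

lemma startedBy_zero : startedBy 0 = ∅ := by
  ext I
  simp only [mem_startedBy, notMem_empty, iff_false, not_and, Nat.le_zero]
  exact fun hk => (Nat.mul_pos hk (Nat.two_pow_pos _)).ne'

def newAt (s : ℕ) : Finset (ℕ × ℕ) := (startedBy s).filter (fun I => I.2 * 2 ^ I.1 = s)

lemma mem_newAt {s : ℕ} {I : ℕ × ℕ} : I ∈ newAt s ↔ 1 ≤ I.2 ∧ I.2 * 2 ^ I.1 = s := by
  simp only [newAt, mem_filter, mem_startedBy]
  exact ⟨fun h => ⟨h.1.1, h.2⟩, fun h => ⟨⟨h.1, h.2.le⟩, h.2⟩⟩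

lemma sum_startedBy_succ {M : Type*} [AddCommMonoid M] (f : ℕ × ℕ → M) (t : ℕ) :
    ∑ I ∈ startedBy (t + 1), f I = ∑ I ∈ startedBy t, f I + ∑ I ∈ newAt (t + 1), f I := by
  have hunion : startedBy (t + 1) = startedBy t ∪ newAt (t + 1) := by
    ext I
    simp only [mem_union, mem_startedBy, mem_newAt]
    omega
  have hdisj : Disjoint (startedBy t) (newAt (t + 1)) := by
    rw [disjoint_left]
    intro I hI hI'
    rw [mem_startedBy] at hI
    rw [mem_newAt] at hI'
    omega
  rw [hunion, sum_union hdisj]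

/-- An interval starting at `s` is determined by its scale `j`, and `2 ^ j ≤ s`. -/
lemma card_newAt_le (s : ℕ) : #(newAt s) ≤ Nat.log 2 s + 1 := by
  rw [← card_range (Nat.log 2 s + 1)]
  refine card_le_card_of_injOn Prod.fst (fun I hI => ?_) (fun I hI J hJ hIJ => ?_)
  · rw [mem_coe, mem_newAt] at hI
    rw [mem_coe, mem_range, Nat.lt_succ_iff]
    exact Nat.le_log_of_pow_le one_lt_two (hI.2 ▸ Nat.le_mul_of_pos_left _ hI.1)
  · rw [mem_coe, mem_newAt] at hI hJ
    have hk : I.2 * 2 ^ I.1 = J.2 * 2 ^ I.1 := by rw [hI.2, hIJ, hJ.2]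
    exact Prod.ext hIJ (Nat.eq_of_mul_eq_mul_right (Nat.two_pow_pos _) hk)

lemma etaI_nonneg (j : ℕ) : 0 ≤ etaI j :=
  le_min (by norm_num) (by positivity)

lemma one_add_etaI_mul_nonneg (j : ℕ) {x : ℝ} (hx : |x| ≤ 1) : 0 ≤ 1 + etaI j * x := by
  have hη : etaI j ≤ 1 := (min_le_left _ _).trans (by norm_num)
  have : -(etaI j * x) ≤ 1 := calc
    -(etaI j * x) ≤ |etaI j * x| := neg_le_abs _
    _ = etaI j * |x| := by rw [abs_mul, abs_of_nonneg (etaI_nonneg j)]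
    _ ≤ 1 * 1 := mul_le_mul hη hx (abs_nonneg x) zero_le_one
    _ = 1 := one_mul 1
  linarith

noncomputable def invMaxAbs {ι : Type*} (s : Finset ι) (r : ι → ℝ) : ℝ :=
  if hne : s.Nonempty then
    (if s.sup' hne (fun i => |r i|) = 0 then 1 else (s.sup' hne (fun i => |r i|))⁻¹)
  else 1

lemma invMaxAbs_nonneg {ι : Type*} (s : Finset ι) (r : ι → ℝ) : 0 ≤ invMaxAbs s r := by
  unfold invMaxAbs
  split_ifs with hne
  · exact zero_le_one
  · obtain ⟨i, hi⟩ := hne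
    exact inv_nonneg.2 ((abs_nonneg _).trans (le_sup' (fun i => |r i|) hi))
  · exact zero_le_one

lemma abs_invMaxAbs_mul_le_one {ι : Type*} {s : Finset ι} (r : ι → ℝ) {i : ι} (hi : i ∈ s) :
    |invMaxAbs s r * r i| ≤ 1 := by
  have hne : s.Nonempty := ⟨i, hi⟩
  have hle : |r i| ≤ s.sup' hne (fun i => |r i|) := le_sup' (fun i => |r i|) hi
  rw [invMaxAbs, dif_pos hne]
  split_ifs with h0
  · rw [one_mul]
    exact (h0 ▸ hle).trans zero_le_one
  · have hpos : 0 < s.sup' hne (fun i => |r i|) := ((abs_nonneg _).trans hle).lt_of_ne' h0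
    rw [abs_mul, abs_inv, abs_of_pos hpos, inv_mul_le_iff₀ hpos, mul_one]
    exact hle

/-- Jensen's inequality at the weighted average of the points. -/
theorem ConvexOn.sum_mul_sub_le_zero {ι E : Type*} [AddCommGroup E] [Module ℝ E] {s : Set E}
    {f : E → ℝ} (hf : ConvexOn ℝ s f) {t : Finset ι} {w : ι → ℝ} {x : ι → E}
    (hw : ∀ i ∈ t, 0 ≤ w i) (hx : ∀ i ∈ t, x i ∈ s) :
    ∑ i ∈ t, w i * (f (∑ j ∈ t, (w j / ∑ k ∈ t, w k) • x j) - f (x i)) ≤ 0 := by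
  set S := ∑ k ∈ t, w k
  set y := ∑ j ∈ t, (w j / S) • x j
  rcases (sum_nonneg hw : 0 ≤ S).eq_or_lt with hS | hS
  · have hzero : ∀ i ∈ t, w i = 0 := (sum_eq_zero_iff_of_nonneg hw).1 hS.symm
    rw [sum_eq_zero fun i hi => by rw [hzero i hi, zero_mul]]
  have hjensen : f y ≤ ∑ i ∈ t, (w i / S) * f (x i) :=
    hf.map_sum_le (fun i hi => div_nonneg (hw i hi) hS.le)
      (by rw [← sum_div, div_self hS.ne']) hx
  have hsplit : ∑ i ∈ t, w i * (f y - f (x i)) = S * (f y - ∑ i ∈ t, (w i / S) * f (x i)) := by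
    rw [mul_sub, sum_mul, mul_sum, ← sum_sub_distrib]
    have : S ≠ 0 := hS.ne'
    refine sum_congr rfl fun i _ => ?_
    field_simp
  rw [hsplit]
  exact mul_nonpos_of_nonneg_of_nonpos hS.le (by linarith)

section Weights

variable {wtil w r : ℕ → ℕ × ℕ → ℝ} {ρ : ℕ → ℝ}

lemma wtil_succ_of_end_le
    (hwtil_after : ∀ t j k, 1 ≤ k → (k + 1) * 2 ^ j < t →
      wtil t (j, k) = wtil ((k + 1) * 2 ^ j) (j, k))
    {t j k : ℕ} (hk : 1 ≤ k) (hend : (k + 1) * 2 ^ j ≤ t) :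
    wtil (t + 1) (j, k) = wtil t (j, k) := by
  rw [hwtil_after (t + 1) j k hk (Nat.lt_succ_of_le hend)]
  rcases hend.eq_or_lt with he | he
  · rw [he]
  · rw [hwtil_after t j k hk he]

lemma wtil_nonneg
    (hwtil_init : ∀ j k, 1 ≤ k → wtil (k * 2 ^ j) (j, k) = 1)
    (hwtil_rec : ∀ t j k, 1 ≤ k → k * 2 ^ j ≤ t → t < (k + 1) * 2 ^ j →
      wtil (t + 1) (j, k) = wtil t (j, k) * (1 + etaI j * ρ t * r t (j, k)))
    (hwtil_after : ∀ t j k, 1 ≤ k → (k + 1) * 2 ^ j < t →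
      wtil t (j, k) = wtil ((k + 1) * 2 ^ j) (j, k))
    (hρr : ∀ t I, I ∈ ACT t → |ρ t * r t I| ≤ 1)
    {j k : ℕ} (hk : 1 ≤ k) {t : ℕ} (ht : k * 2 ^ j ≤ t) : 0 ≤ wtil t (j, k) := by
  induction t, ht using Nat.le_induction with
  | base => rw [hwtil_init j k hk]; exact zero_le_one
  | succ t hstart ih =>
    rcases lt_or_ge t ((k + 1) * 2 ^ j) with hact | hend
    · rw [hwtil_rec t j k hk hstart hact, mul_assoc (etaI j)]
      exact mul_nonneg ih (one_add_etaI_mul_nonneg j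
        (hρr t (j, k) (mem_ACT.2 ⟨hk, mem_dIval.2 ⟨hstart, hact⟩⟩)))
    · rw [wtil_succ_of_end_le hwtil_after hk hend]
      exact ih

lemma wtil_succ_eq_add
    (hwtil_rec : ∀ t j k, 1 ≤ k → k * 2 ^ j ≤ t → t < (k + 1) * 2 ^ j →
      wtil (t + 1) (j, k) = wtil t (j, k) * (1 + etaI j * ρ t * r t (j, k)))
    (hwtil_after : ∀ t j k, 1 ≤ k → (k + 1) * 2 ^ j < t →
      wtil t (j, k) = wtil ((k + 1) * 2 ^ j) (j, k))
    (hw : ∀ t j k, w t (j, k) = etaI j * (if t ∈ dIval j k then (1 : ℝ) else 0) * wtil t (j, k))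
    {t : ℕ} {I : ℕ × ℕ} (hI : I ∈ startedBy t) :
    wtil (t + 1) I = wtil t I + ρ t * (w t I * r t I) := by
  obtain ⟨j, k⟩ := I
  obtain ⟨hk, hstart⟩ := mem_startedBy.1 hI
  rw [hw]
  by_cases hact : t ∈ dIval j k
  · rw [if_pos hact, hwtil_rec t j k hk hstart (mem_dIval.1 hact).2]
    ring
  · rw [if_neg hact, mul_zero, zero_mul, zero_mul, mul_zero, add_zero]
    rw [mem_dIval, not_and, not_lt] at hact
    exact wtil_succ_of_end_le hwtil_after hk (hact hstart)

lemma sum_wtil_startedBy_succ_le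
    (hwtil_init : ∀ j k, 1 ≤ k → wtil (k * 2 ^ j) (j, k) = 1)
    (hwtil_rec : ∀ t j k, 1 ≤ k → k * 2 ^ j ≤ t → t < (k + 1) * 2 ^ j →
      wtil (t + 1) (j, k) = wtil t (j, k) * (1 + etaI j * ρ t * r t (j, k)))
    (hwtil_after : ∀ t j k, 1 ≤ k → (k + 1) * 2 ^ j < t →
      wtil t (j, k) = wtil ((k + 1) * 2 ^ j) (j, k))
    (hw : ∀ t j k, w t (j, k) = etaI j * (if t ∈ dIval j k then (1 : ℝ) else 0) * wtil t (j, k))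
    {t : ℕ} (hρ : 0 ≤ ρ t) (hregret : ∑ I ∈ ACT t, w t I * r t I ≤ 0) :
    ∑ I ∈ startedBy (t + 1), wtil (t + 1) I ≤ ∑ I ∈ startedBy t, wtil t I + #(newAt (t + 1)) := by
  have hborn : ∀ I ∈ newAt (t + 1), wtil (t + 1) I = 1 := fun I hI => by
    obtain ⟨hk, hstart⟩ := mem_newAt.1 hI
    rw [← hstart]
    exact hwtil_init I.1 I.2 hk
  have hidle : ∀ I ∈ startedBy t, I ∉ ACT t → w t I * r t I = 0 := fun I hI hnot => by
    rw [mem_ACT, not_and] at hnot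
    rw [hw, if_neg (hnot (mem_startedBy.1 hI).1), mul_zero, zero_mul, zero_mul]
  calc ∑ I ∈ startedBy (t + 1), wtil (t + 1) I
      = ∑ I ∈ startedBy t, (wtil t I + ρ t * (w t I * r t I)) + #(newAt (t + 1)) := by
        rw [sum_startedBy_succ, sum_congr rfl fun I hI => wtil_succ_eq_add hwtil_rec hwtil_after hw hI,
          sum_congr rfl hborn, sum_const, nsmul_one]
    _ = ∑ I ∈ startedBy t, wtil t I + ρ t * ∑ I ∈ ACT t, w t I * r t I + #(newAt (t + 1)) := by
        rw [sum_add_distrib, ← mul_sum, sum_subset (ACT_subset_startedBy t) hidle]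
    _ ≤ ∑ I ∈ startedBy t, wtil t I + #(newAt (t + 1)) := by
        have := mul_nonpos_of_nonneg_of_nonpos hρ hregret
        linarith

end Weights

lemma le_mul_log_add_one_of_succ_le {S : ℕ → ℝ} (h0 : S 0 ≤ 0)
    (hS : ∀ t, S (t + 1) ≤ S t + (Nat.log 2 (t + 1) + 1)) (t : ℕ) :
    S t ≤ t * (Nat.log 2 t + 1) := by
  induction t with
  | zero => simpa using h0
  | succ t ih =>
    have hmono : (Nat.log 2 t : ℝ) ≤ Nat.log 2 (t + 1) := by
      exact_mod_cast Nat.log_mono_right t.le_succ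
    have := mul_le_mul_of_nonneg_left hmono t.cast_nonneg
    push_cast
    linarith [hS t]

theorem ocelad_total_weight_le_general
    {d : ℕ} (Θ : Set (EuclideanSpace ℝ (Fin d)))
    (ℓ : ℕ → EuclideanSpace ℝ (Fin d) → ℝ) (hℓ : ∀ t, ConvexOn ℝ Θ (ℓ t))
    (θL : ℕ → ℕ × ℕ → EuclideanSpace ℝ (Fin d))
    (hθL : ∀ t I, I ∈ ACT t → θL t I ∈ Θ)
    (wtil w : ℕ → ℕ × ℕ → ℝ) (θhat : ℕ → EuclideanSpace ℝ (Fin d))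
    (r : ℕ → ℕ × ℕ → ℝ) (ρ : ℕ → ℝ)
    (hwtil_init : ∀ j k, 1 ≤ k → wtil (k * 2 ^ j) (j, k) = 1)
    (hwtil_rec : ∀ t j k, 1 ≤ k → k * 2 ^ j ≤ t → t < (k + 1) * 2 ^ j →
      wtil (t + 1) (j, k) = wtil t (j, k) * (1 + etaI j * ρ t * r t (j, k)))
    (hwtil_after : ∀ t j k, 1 ≤ k → (k + 1) * 2 ^ j < t →
      wtil t (j, k) = wtil ((k + 1) * 2 ^ j) (j, k))
    (hw : ∀ t j k, w t (j, k) = etaI j * (if t ∈ dIval j k then (1 : ℝ) else 0) * wtil t (j, k))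
    (hθhat : ∀ t, θhat t = ∑ I ∈ ACT t, (w t I / ∑ I' ∈ ACT t, w t I') • θL t I)
    (hr : ∀ t I, r t I = ℓ t (θhat t) - ℓ t (θL t I))
    (hρ : ∀ t, ρ t = if hne : (ACT t).Nonempty then
        (if (ACT t).sup' hne (fun I => |r t I|) = 0 then 1
         else ((ACT t).sup' hne (fun I => |r t I|))⁻¹) else 1) :
    ∀ t : ℕ, 1 ≤ t →
      ∑ I ∈ startedBy t, wtil t I ≤ t * (Real.logb 2 t + 1) := by
  have hρ_eq : ∀ t, ρ t = invMaxAbs (ACT t) (r t) := hρ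
  have hw_nonneg : ∀ t, ∀ I ∈ ACT t, 0 ≤ w t I := fun t I hI => by
    obtain ⟨hk, hact⟩ := mem_ACT.1 hI
    rw [hw, if_pos hact, mul_one]
    refine mul_nonneg (etaI_nonneg _) (wtil_nonneg hwtil_init hwtil_rec hwtil_after ?_ hk
      (mem_dIval.1 hact).1)
    exact fun t I hI => hρ_eq t ▸ abs_invMaxAbs_mul_le_one (r t) hI
  have hregret : ∀ t, ∑ I ∈ ACT t, w t I * r t I ≤ 0 := fun t => by
    simp only [hr, hθhat]
    exact (hℓ t).sum_mul_sub_le_zero (hw_nonneg t) (hθL t)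
  have hbound := le_mul_log_add_one_of_succ_le (S := fun t => ∑ I ∈ startedBy t, wtil t I)
    (by simp [startedBy_zero]) fun t => (sum_wtil_startedBy_succ_le hwtil_init hwtil_rec
      hwtil_after hw (hρ_eq t ▸ invMaxAbs_nonneg _ _) (hregret t)).trans
        (by gcongr; exact_mod_cast card_newAt_le (t + 1))
  intro t _
  refine (hbound t).trans (mul_le_mul_of_nonneg_left ?_ t.cast_nonneg)
  have := Real.natLog_le_logb t 2
  push_cast at this
  linarith

/-- Under the OCELAD setup, the total weight satisfies
`W̃_t = ∑_{I∈ℐ} w̃_t(I) ≤ t·(log₂ t + 1)` for every `t ≥ 1`.  (Intervals starting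
after time `t` have zero weight, so the sum is taken over `startedBy t`.) -/
theorem ocelad_total_weight_le
    {d : ℕ} (Θ : Set (EuclideanSpace ℝ (Fin d))) (hΘ : Convex ℝ Θ)
    (ℓ : ℕ → EuclideanSpace ℝ (Fin d) → ℝ) (hℓ : ∀ t, ConvexOn ℝ Θ (ℓ t))
    (θL : ℕ → ℕ × ℕ → EuclideanSpace ℝ (Fin d))
    (hθL : ∀ t I, I ∈ ACT t → θL t I ∈ Θ)
    (wtil w : ℕ → ℕ × ℕ → ℝ) (θhat : ℕ → EuclideanSpace ℝ (Fin d))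
    (r : ℕ → ℕ × ℕ → ℝ) (ρ : ℕ → ℝ)
    (hwtil_before : ∀ t j k, 1 ≤ k → t < k * 2 ^ j → wtil t (j, k) = 0)
    (hwtil_init : ∀ j k, 1 ≤ k → wtil (k * 2 ^ j) (j, k) = 1)
    (hwtil_rec : ∀ t j k, 1 ≤ k → k * 2 ^ j ≤ t → t < (k + 1) * 2 ^ j →
      wtil (t + 1) (j, k) = wtil t (j, k) * (1 + etaI j * ρ t * r t (j, k)))
    (hwtil_after : ∀ t j k, 1 ≤ k → (k + 1) * 2 ^ j < t →
      wtil t (j, k) = wtil ((k + 1) * 2 ^ j) (j, k))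
    (hw : ∀ t j k, w t (j, k) = etaI j * (if t ∈ dIval j k then (1 : ℝ) else 0) * wtil t (j, k))
    (hθhat : ∀ t, θhat t = ∑ I ∈ ACT t, (w t I / ∑ I' ∈ ACT t, w t I') • θL t I)
    (hr : ∀ t I, r t I = ℓ t (θhat t) - ℓ t (θL t I))
    (hρ : ∀ t, ρ t = if hne : (ACT t).Nonempty then
        (if (ACT t).sup' hne (fun I => |r t I|) = 0 then 1
         else ((ACT t).sup' hne (fun I => |r t I|))⁻¹) else 1) :
    ∀ t : ℕ, 1 ≤ t →
      ∑ I ∈ startedBy t, wtil t I ≤ t * (Real.logb 2 t + 1) :=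
  ocelad_total_weight_le_general Θ ℓ hℓ θL hθL wtil w θhat r ρ hwtil_init hwtil_rec hwtil_after hw
    hθhat hr hρ
end

section
/- For every interval of natural numbers I = [q, s] with 1 ≤ q ≤ s, there exist two finite sequences of pairwise disjoint, consecutive dyadic intervals (I_{−k}, …, I_0) ⊆ ℐ and (I_1, I_2, …, I_p) ⊆ ℐ, all contained in I, whose union (in order I_{−k}, …, I_0, I_1, …, I_p) is exactly I, and such that |I_{−i}|/|I_{−i+1}| ≤ 1/2 for all i ≥ 1 and |I_i|/|I_{i−1}| ≤ 1/2 for all i ≥ 2. -/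
open Finset

lemma dIval_div_eq_Ico {j a : ℕ} (h : 2 ^ j ∣ a) : dIval j (a / 2 ^ j) = Ico a (a + 2 ^ j) := by
  rw [dIval, add_mul, one_mul, Nat.div_mul_cancel h]

lemma two_mul_two_pow_le_two_pow {i j : ℕ} (h : i < j) : 2 * 2 ^ i ≤ 2 ^ j := by
  rw [← pow_succ']
  exact Nat.pow_le_pow_right two_pos h

lemma Monotone.biUnion_range_Ico_succ {α : Type*} [LinearOrder α] [LocallyFiniteOrder α]
    {f : ℕ → α} (hf : Monotone f) (n : ℕ) :
    (range n).biUnion (fun i => Ico (f i) (f (i + 1))) = Ico (f 0) (f n) := by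
  induction n with
  | zero => simp
  | succ n ih =>
    rw [range_add_one, biUnion_insert, ih, union_comm,
      Ico_union_Ico_eq_Ico (hf n.zero_le) (hf n.le_succ)]

lemma Monotone.disjoint_Ico_succ {α : Type*} [Preorder α] [LocallyFiniteOrder α]
    {f : ℕ → α} (hf : Monotone f) {i j : ℕ} (hij : i ≠ j) :
    Disjoint (Ico (f i) (f (i + 1))) (Ico (f j) (f (j + 1))) := by
  rw [← disjoint_coe, coe_Ico, coe_Ico]
  exact hf.pairwise_disjoint_on_Ico_succ hij

lemma padicValNat_two_lt_add_two_pow {a : ℕ} (ha : a ≠ 0) :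
    padicValNat 2 a < padicValNat 2 (a + 2 ^ padicValNat 2 a) := by
  set v := padicValNat 2 a with hv
  obtain ⟨c, hc⟩ : 2 ^ v ∣ a := pow_padicValNat_dvd
  have hc_odd : ¬ 2 ∣ c := fun ⟨d, hd⟩ =>
    pow_succ_padicValNat_not_dvd (p := 2) ha ⟨d, by rw [← hv, hc, hd, pow_succ, mul_assoc]⟩
  rw [hc, ← mul_add_one, padicValNat.mul (by positivity) (by omega), padicValNat.prime_pow]
  have := one_le_padicValNat_of_dvd (p := 2) (n := c + 1) (by omega) (by omega)
  omega

namespace GreedyDyadic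

/-- The exponent of the longest dyadic interval that starts at `a` and fits in `[a, b)`. -/
def exp (b a : ℕ) : ℕ := min (padicValNat 2 a) (Nat.log 2 (b - a))

def step (b a : ℕ) : ℕ := a + 2 ^ exp b a

def IsFalling (b a : ℕ) : Prop := Nat.log 2 (b - a) < padicValNat 2 a

instance (b a : ℕ) : Decidable (IsFalling b a) := inferInstanceAs (Decidable (_ < _))

variable {a b : ℕ}

lemma two_pow_exp_dvd (b a : ℕ) : 2 ^ exp b a ∣ a :=
  (pow_dvd_pow 2 (min_le_left _ _)).trans pow_padicValNat_dvd

lemma two_pow_exp_le (h : a < b) : 2 ^ exp b a ≤ b - a :=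
  (Nat.pow_le_pow_right two_pos (min_le_right _ _)).trans (Nat.pow_log_le_self 2 (by omega))

lemma exp_of_not_isFalling (h : ¬ IsFalling b a) : exp b a = padicValNat 2 a :=
  min_eq_left (not_lt.mp h)

lemma exp_of_isFalling (h : IsFalling b a) : exp b a = Nat.log 2 (b - a) :=
  min_eq_right h.le

lemma exp_lt_exp_step (ha : a ≠ 0) (h : ¬ IsFalling b a) (h' : ¬ IsFalling b (step b a)) :
    exp b a < exp b (step b a) := by
  rw [exp_of_not_isFalling h', step, exp_of_not_isFalling h]
  exact padicValNat_two_lt_add_two_pow ha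

lemma log_sub_step_lt (h : IsFalling b a) (h' : step b a < b) :
    Nat.log 2 (b - step b a) < Nat.log 2 (b - a) := by
  have hlt := Nat.lt_pow_succ_log_self one_lt_two (b - a)
  rw [step, exp_of_isFalling h] at h' ⊢
  refine Nat.log_lt_of_lt_pow (by omega) ?_
  rw [pow_succ] at hlt
  omega

lemma log_sub_le_padicValNat_step (h : IsFalling b a) :
    Nat.log 2 (b - a) ≤ padicValNat 2 (step b a) := by
  have hdvd : 2 ^ Nat.log 2 (b - a) ∣ step b a := by
    rw [step, exp_of_isFalling h]
    exact dvd_add ((pow_dvd_pow 2 h.le).trans pow_padicValNat_dvd) dvd_rfl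
  exact (padicValNat_dvd_iff_le (by simp [step])).mp hdvd

lemma isFalling_step (h : IsFalling b a) (h' : step b a < b) : IsFalling b (step b a) :=
  (log_sub_step_lt h h').trans_le (log_sub_le_padicValNat_step h)

lemma exp_step_lt_exp (h : IsFalling b a) (h' : step b a < b) :
    exp b (step b a) < exp b a := by
  rw [exp_of_isFalling (isFalling_step h h'), exp_of_isFalling h]
  exact log_sub_step_lt h h'

def point (q b : ℕ) : ℕ → ℕ
  | 0 => q
  | i + 1 => if point q b i < b then step b (point q b i) else point q b i

variable {q : ℕ}

lemma point_succ_of_lt {i : ℕ} (h : point q b i < b) :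
    point q b (i + 1) = step b (point q b i) :=
  if_pos h

lemma point_monotone (q b : ℕ) : Monotone (point q b) := by
  refine monotone_nat_of_le_succ fun i => ?_
  by_cases h : point q b i < b
  · rw [point_succ_of_lt h, step]
    exact Nat.le_add_right _ _
  · simp [point, h]

lemma le_point (q b i : ℕ) : q ≤ point q b i := point_monotone q b i.zero_le

lemma point_le (hqb : q ≤ b) (i : ℕ) : point q b i ≤ b := by
  induction i with
  | zero => exact hqb
  | succ i ih =>
    by_cases h : point q b i < b
    · rw [point_succ_of_lt h, step]
      have := two_pow_exp_le h
      omega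
    · simpa [point, h] using ih

lemma min_add_le_point (q b i : ℕ) : min b (q + i) ≤ point q b i := by
  induction i with
  | zero => simp [point]
  | succ i ih =>
    by_cases h : point q b i < b
    · rw [point_succ_of_lt h, step]
      have : 1 ≤ 2 ^ exp b (point q b i) := Nat.one_le_two_pow
      omega
    · simp only [point, h, if_false]
      omega

lemma exists_le_point (q b : ℕ) : ∃ i, b ≤ point q b i :=
  ⟨b - q, (min_add_le_point q b (b - q)).trans' (by omega)⟩

def count (q b : ℕ) : ℕ := Nat.find (exists_le_point q b)

lemma point_lt_of_lt_count {i : ℕ} (hi : i < count q b) : point q b i < b :=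
  not_le.mp (Nat.find_min (exists_le_point q b) hi)

lemma point_count (hqb : q ≤ b) : point q b (count q b) = b :=
  (point_le hqb _).antisymm (Nat.find_spec (exists_le_point q b))

lemma count_pos (h : q < b) : 0 < count q b :=
  (Nat.find_pos _).mpr (by simpa [point] using h)

lemma point_succ_of_lt_count {i : ℕ} (hi : i < count q b) :
    point q b (i + 1) = point q b i + 2 ^ exp b (point q b i) :=
  point_succ_of_lt (point_lt_of_lt_count hi)

lemma exists_eq_count_or_isFalling (q b : ℕ) :
    ∃ i, i = count q b ∨ IsFalling b (point q b i) :=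
  ⟨count q b, Or.inl rfl⟩

def fallStart (q b : ℕ) : ℕ := Nat.find (exists_eq_count_or_isFalling q b)

lemma fallStart_le_count : fallStart q b ≤ count q b := Nat.find_min' _ (Or.inl rfl)

lemma not_isFalling_of_lt_fallStart {i : ℕ} (hi : i < fallStart q b) :
    ¬ IsFalling b (point q b i) :=
  fun h => Nat.find_min (exists_eq_count_or_isFalling q b) hi (Or.inr h)

lemma isFalling_of_fallStart_le {i : ℕ} (hi : fallStart q b ≤ i) (hic : i < count q b) :
    IsFalling b (point q b i) := by
  induction i, hi using Nat.le_induction with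
  | base => exact (Nat.find_spec (exists_eq_count_or_isFalling q b)).resolve_left hic.ne
  | succ i _ ih =>
    have hlt := point_lt_of_lt_count (Nat.lt_of_succ_lt hic)
    rw [point_succ_of_lt hlt]
    exact isFalling_step (ih (Nat.lt_of_succ_lt hic))
      (point_succ_of_lt hlt ▸ point_lt_of_lt_count hic)

lemma exp_lt_exp_succ_of_lt_fallStart (hq : q ≠ 0) {i : ℕ} (hi : i + 1 < fallStart q b) :
    exp b (point q b i) < exp b (point q b (i + 1)) := by
  have hlt := point_lt_of_lt_count (fallStart_le_count.trans_lt' (Nat.lt_of_succ_lt hi))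
  have hrising := not_isFalling_of_lt_fallStart hi
  rw [point_succ_of_lt hlt] at hrising ⊢
  exact exp_lt_exp_step (by have := le_point q b i; omega)
    (not_isFalling_of_lt_fallStart (Nat.lt_of_succ_lt hi)) hrising

lemma exp_succ_lt_exp_of_fallStart_le {i : ℕ} (hi : fallStart q b ≤ i)
    (hic : i + 1 < count q b) :
    exp b (point q b (i + 1)) < exp b (point q b i) := by
  have hlt := point_lt_of_lt_count (Nat.lt_of_succ_lt hic)
  have hnext := point_lt_of_lt_count hic
  rw [point_succ_of_lt hlt] at hnext ⊢
  exact exp_step_lt_exp (isFalling_of_fallStart_le hi (Nat.lt_of_succ_lt hic)) hnext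

end GreedyDyadic

open GreedyDyadic in
/-- Every interval of natural numbers `[q, s]` with `1 ≤ q ≤ s` can be
partitioned into two finite sequences of pairwise disjoint, consecutive dyadic
intervals `(I_{−k}, …, I_0)` (list positions `0, …, kpos`) and
`(I_1, …, I_p)` (list positions `kpos + 1, …, m − 1`), whose union in order is
exactly `[q, s]`, with `|I_{−i}|/|I_{−i+1}| ≤ 1/2` for all `i ≥ 1` and
`|I_i|/|I_{i−1}| ≤ 1/2` for all `i ≥ 2`. -/
theorem dyadic_partition (q s : ℕ) (hq : 1 ≤ q) (hqs : q ≤ s) :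
    ∃ (m kpos : ℕ) (J : ℕ → ℕ × ℕ), kpos < m ∧
      -- each piece is a genuine dyadic interval (k ≥ 1)
      (∀ i < m, 1 ≤ (J i).2) ∧
      -- the intervals are consecutive: each starts right after the previous ends
      (∀ i, i + 1 < m → (J (i + 1)).2 * 2 ^ (J (i + 1)).1 = ((J i).2 + 1) * 2 ^ (J i).1) ∧
      -- the first starts at q and the last ends at s
      (J 0).2 * 2 ^ (J 0).1 = q ∧
      ((J (m - 1)).2 + 1) * 2 ^ (J (m - 1)).1 = s + 1 ∧
      -- all pieces lie inside [q, s] and their union is exactly [q, s]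
      (∀ i < m, dIval (J i).1 (J i).2 ⊆ Finset.Icc q s) ∧
      Finset.Icc q s = (Finset.range m).biUnion (fun i => dIval (J i).1 (J i).2) ∧
      -- the pieces are pairwise disjoint
      (∀ i j, i < j → j < m → Disjoint (dIval (J i).1 (J i).2) (dIval (J j).1 (J j).2)) ∧
      -- lengths at most double going forward up to position kpos (|I_{−i}| ≤ |I_{−i+1}|/2)
      (∀ i, i + 1 ≤ kpos → 2 * 2 ^ (J i).1 ≤ 2 ^ (J (i + 1)).1) ∧
      -- lengths at least halve going forward after position kpos (|I_i| ≤ |I_{i−1}|/2 for i ≥ 2)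
      (∀ i, kpos + 1 ≤ i → i + 1 < m → 2 * 2 ^ (J (i + 1)).1 ≤ 2 ^ (J i).1) := by
  have hqb : q < s + 1 := Nat.lt_succ_of_le hqs
  set f := point q (s + 1)
  set m := count q (s + 1)
  set e := fun i => exp (s + 1) (f i)
  have hdvd (i : ℕ) : 2 ^ e i ∣ f i := two_pow_exp_dvd _ _
  have hnext {i : ℕ} (hi : i < m) : f i + 2 ^ e i = f (i + 1) :=
    (point_succ_of_lt_count hi).symm
  have hpiece {i : ℕ} (hi : i < m) : dIval (e i) (f i / 2 ^ e i) = Ico (f i) (f (i + 1)) := by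
    rw [dIval_div_eq_Ico (hdvd i), hnext hi]
  have hm : 0 < m := count_pos hqb
  have hstart : fallStart q (s + 1) ≤ m := fallStart_le_count
  -- if the first interval is already falling, `fallStart - 1` truncates to `0`
  refine ⟨m, fallStart q (s + 1) - 1, fun i => (e i, f i / 2 ^ e i), by omega, fun i _ => ?_,
    fun i hi => ?_, Nat.div_mul_cancel (hdvd 0), ?_, fun i hi => ?_, ?_, fun i j hij hj => ?_,
    fun i hi => ?_, fun i hi hi' => ?_⟩
  · exact Nat.div_pos (Nat.le_of_dvd (hq.trans (le_point q _ i)) (hdvd i)) (by positivity)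
  · simp only [add_mul, one_mul, Nat.div_mul_cancel (hdvd _), hnext (Nat.lt_of_succ_lt hi)]
  · simp only [add_mul, one_mul, Nat.div_mul_cancel (hdvd _), hnext (Nat.sub_one_lt_of_lt hm),
      Nat.sub_add_cancel hm]
    exact point_count hqb.le
  · rw [hpiece hi]
    exact (Ico_subset_Ico (le_point q _ i) (point_le hqb.le _)).trans
      (Ico_add_one_right_eq_Icc q s).subset
  · rw [biUnion_congr rfl fun i hi => hpiece (mem_range.mp hi),
      (point_monotone q _).biUnion_range_Ico_succ, point_count hqb.le]
    exact (Ico_add_one_right_eq_Icc q s).symm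
  · rw [hpiece (hij.trans hj), hpiece hj]
    exact (point_monotone q _).disjoint_Ico_succ hij.ne
  · exact two_mul_two_pow_le_two_pow (exp_lt_exp_succ_of_lt_fallStart (by omega) (by omega))
  · exact two_mul_two_pow_le_two_pow (exp_succ_lt_exp_of_fallStart_le (by omega) hi')
end
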